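/- arXiv:1804.02044 — 4 statements merged into one kernel-verified Lean document; each statement's English description precedes it below -/
import Mathlib

section
/- Let M = [[0,1],[-1,2]]. Then ⋃_{k∈ℤ} { M^k v : v ∈ (ℝ_{>0})² } = ℝ² \ { t·(-1,-1) : t ≥ 0 }. -/
open Matrix

lemma Mdet : IsUnit (!![0,1;-1,2] : Matrix (Fin 2) (Fin 2) ℝ).det := by
  simp [Matrix.det_fin_two_of]

lemma Mpow (k : ℤ) : (!![0,1;-1,2] : Matrix (Fin 2) (Fin 2) ℝ) ^ k
    = !![1-(k:ℝ), k; -k, k+1] := by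
  induction k using Int.induction_on with
  | zero => ext i j; fin_cases i <;> fin_cases j <;> simp [Matrix.one_fin_two]
  | succ n ih =>
      rw [zpow_add_one Mdet, ih, Matrix.mul_fin_two]
      push_cast
      congr 1 <;> ring
  | pred n ih =>
      have hinv : (!![0,1;-1,2] : Matrix (Fin 2) (Fin 2) ℝ)⁻¹ = !![2,-1;1,0] := by
        apply Matrix.inv_eq_right_inv
        rw [Matrix.mul_fin_two, Matrix.one_fin_two]
        norm_num
      rw [zpow_sub_one Mdet, ih, hinv, Matrix.mul_fin_two]
      push_cast
      congr 1 <;> ring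

lemma MmulVec (k : ℤ) (v : Fin 2 → ℝ) :
    ((!![0,1;-1,2] : Matrix (Fin 2) (Fin 2) ℝ) ^ k).mulVec v
      = ![(1-(k:ℝ)) * v 0 + k * v 1, -(k:ℝ) * v 0 + (k+1) * v 1] := by
  rw [Mpow]
  funext i
  fin_cases i <;> simp [Matrix.mulVec, dotProduct, Fin.sum_univ_two]

lemma exists_k (a b : ℝ) (h : ¬ (a = b ∧ a ≤ 0)) :
    ∃ k : ℤ, 0 < a + k * (a - b) ∧ 0 < b + k * (a - b) := by
  push_neg at h
  by_cases hab : a = b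
  · have ha : 0 < a := h hab
    exact ⟨0, by simpa using ha, by simpa [← hab] using ha⟩
  · set C : ℝ := max (-a) (-b) + 1 with hC
    have hCa : -a ≤ max (-a) (-b) := le_max_left _ _
    have hCb : -b ≤ max (-a) (-b) := le_max_right _ _
    rcases lt_or_gt_of_ne (sub_ne_zero_of_ne hab) with hd | hd
    · -- a - b < 0
      refine ⟨-⌈C / (-(a-b))⌉, ?_, ?_⟩ <;>
      · have h1 : (C / (-(a-b)) : ℝ) ≤ ⌈C / (-(a-b))⌉ := Int.le_ceil _
        have h2 : C ≤ (⌈C / (-(a-b))⌉ : ℝ) * (-(a-b)) :=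
          (div_le_iff₀ (by linarith)).mp h1
        push_cast
        nlinarith
    · -- a - b > 0
      refine ⟨⌈C / (a-b)⌉, ?_, ?_⟩ <;>
      · have h1 : (C / (a-b) : ℝ) ≤ ⌈C / (a-b)⌉ := Int.le_ceil _
        have h2 : C ≤ (⌈C / (a-b)⌉ : ℝ) * (a-b) :=
          (div_le_iff₀ hd).mp h1
        nlinarith

theorem stmt_3 :
    let M : Matrix (Fin 2) (Fin 2) ℝ := !![0, 1; -1, 2]
    (⋃ k : ℤ, (fun v => (M ^ k).mulVec v) '' {v : Fin 2 → ℝ | 0 < v 0 ∧ 0 < v 1})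
      = Set.univ \ {w : Fin 2 → ℝ | ∃ t : ℝ, 0 ≤ t ∧ w = fun _ => t * (-1)} := by
  intro M
  have hM : M = !![0,1;-1,2] := rfl
  ext w
  simp only [Set.mem_iUnion, Set.mem_image, Set.mem_setOf_eq, Set.mem_diff,
    Set.mem_univ, true_and, hM]
  constructor
  · rintro ⟨k, v, ⟨hv0, hv1⟩, rfl⟩ ⟨t, ht, heq⟩
    have h0 := congrFun heq 0
    have h1 := congrFun heq 1
    rw [MmulVec] at h0 h1
    simp only [Matrix.cons_val_zero, Matrix.cons_val_one, Matrix.head_cons] at h0 h1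
    have hd : v 0 = v 1 := by linarith
    have h2 : v 0 = -t := by linear_combination h0 + (k:ℝ) * hd
    linarith
  · intro h
    have h' : ¬ (w 0 = w 1 ∧ w 0 ≤ 0) := by
      rintro ⟨he, hle⟩
      exact h ⟨-(w 0), by linarith, by
        funext i; fin_cases i <;> simp <;> linarith⟩
    obtain ⟨k, hk0, hk1⟩ := exists_k (w 0) (w 1) h'
    refine ⟨k, ![w 0 + k * (w 0 - w 1), w 1 + k * (w 0 - w 1)], ⟨by simpa using hk0, by simpa using hk1⟩, ?_⟩
    rw [MmulVec]
    funext i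
    fin_cases i <;> simp <;> ring
end

section
/- For a nonzero real number k and real numbers x, y with y > 0, the following are equivalent: (a) for every integer n, (nkx+1)² + (nky)² ≥ 1; (b) (x + 1/k)² + y² ≥ 1/k² and (x - 1/k)² + y² ≥ 1/k². -/
/-!
Write `a = k x`, `b = k y`. Then `(n a + 1)² + (n b)² - 1 = n² (a² + b²) + 2 n a`, a quadratic in `n`
with nonnegative leading coefficient and no constant term; for `|n| ≥ 1` it equals
`|n| ((|n| - 1)(a² + b²) + (a² + b² ± 2a))`, so it is nonnegative on all integers as soon as it is
nonnegative at `n = ±1`. Dividing the two conditions at `n = ±1` by `k²` gives the two discs of (b).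
-/

lemma forall_int_nonneg_sq_mul_add_mul_iff {α : Type*} [CommRing α] [LinearOrder α]
    [IsStrictOrderedRing α] {A B : α} (hA : 0 ≤ A) :
    (∀ n : ℤ, 0 ≤ (n : α) ^ 2 * A + n * B) ↔ 0 ≤ A + B ∧ 0 ≤ A - B := by
  refine ⟨fun h ↦ ⟨by simpa using h 1, by simpa [sub_eq_add_neg] using h (-1)⟩, ?_⟩
  rintro ⟨h_one, h_neg_one⟩ n
  rcases lt_trichotomy n 0 with hn | rfl | hn
  · have hn' : (n : α) ≤ -1 := by exact_mod_cast Int.le_sub_one_of_lt hn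
    have hfactor : (n : α) ^ 2 * A + n * B = (-n) * ((-n - 1) * A + (A - B)) := by ring
    rw [hfactor]
    exact mul_nonneg (neg_nonneg.2 (hn'.trans (neg_nonpos.2 zero_le_one)))
      (add_nonneg (mul_nonneg (by rw [sub_nonneg, le_neg]; exact hn') hA) h_neg_one)
  · simp
  · have hn' : (1 : α) ≤ n := by exact_mod_cast hn
    have hfactor : (n : α) ^ 2 * A + n * B = n * ((n - 1) * A + (A + B)) := by ring
    rw [hfactor]
    exact mul_nonneg (zero_le_one.trans hn') (add_nonneg (mul_nonneg (sub_nonneg.2 hn') hA) h_one)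

lemma forall_int_one_le_sq_add_sq_iff (a b : ℝ) :
    (∀ n : ℤ, 1 ≤ (n * a + 1) ^ 2 + (n * b) ^ 2) ↔
      1 ≤ (a + 1) ^ 2 + b ^ 2 ∧ 1 ≤ (a - 1) ^ 2 + b ^ 2 := by
  have hexpand (t : ℝ) :
      (t * a + 1) ^ 2 + (t * b) ^ 2 = 1 + (t ^ 2 * (a ^ 2 + b ^ 2) + t * (2 * a)) := by
    ring
  have hplus : (a + 1) ^ 2 + b ^ 2 = 1 + ((a ^ 2 + b ^ 2) + 2 * a) := by ring
  have hminus : (a - 1) ^ 2 + b ^ 2 = 1 + ((a ^ 2 + b ^ 2) - 2 * a) := by ring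
  simp only [hexpand, hplus, hminus, le_add_iff_nonneg_right]
  exact forall_int_nonneg_sq_mul_add_mul_iff (by positivity)

lemma one_div_sq_le_add_div_sq_add_sq_iff {k : ℝ} (hk : k ≠ 0) (x y s : ℝ) :
    1 / k ^ 2 ≤ (x + s / k) ^ 2 + y ^ 2 ↔ 1 ≤ (k * x + s) ^ 2 + (k * y) ^ 2 := by
  have hscale : (k * x + s) ^ 2 + (k * y) ^ 2 = ((x + s / k) ^ 2 + y ^ 2) * k ^ 2 := by
    field_simp
  rw [hscale, div_le_iff₀ (by positivity)]

theorem stmt_6_general (k x y : ℝ) (hk : k ≠ 0) :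
    (∀ n : ℤ, 1 ≤ (n * k * x + 1) ^ 2 + (n * k * y) ^ 2) ↔
      (1 / k ^ 2 ≤ (x + 1 / k) ^ 2 + y ^ 2 ∧ 1 / k ^ 2 ≤ (x - 1 / k) ^ 2 + y ^ 2) := by
  simp only [mul_assoc]
  rw [forall_int_one_le_sq_add_sq_iff, sub_eq_add_neg x, ← neg_div,
    one_div_sq_le_add_div_sq_add_sq_iff hk, one_div_sq_le_add_div_sq_add_sq_iff hk, ← sub_eq_add_neg]

theorem stmt_6 (k x y : ℝ) (hk : k ≠ 0) (hy : 0 < y) :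
    (∀ n : ℤ, 1 ≤ (n * k * x + 1) ^ 2 + (n * k * y) ^ 2) ↔
      (1 / k ^ 2 ≤ (x + 1 / k) ^ 2 + y ^ 2 ∧ 1 / k ^ 2 ≤ (x - 1 / k) ^ 2 + y ^ 2) :=
  stmt_6_general k x y hk
end

section
/- For a nonzero integer k, let D_k = { (x,y) ∈ ℝ² : y > 0, -1/2 ≤ x ≤ 1/2, (x+1/k)² + y² ≥ 1/k², (x-1/k)² + y² ≥ 1/k² }. Then the hyperbolic area ∫∫_{D_k} dx dy / y² is finite if and only if |k| ≤ 4. -/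
open MeasureTheory Set Real

-- interval integrability of (√x)⁻¹
lemma aux_sqrt_ii (a b : ℝ) :
    IntervalIntegrable (fun x : ℝ => (Real.sqrt x)⁻¹) volume a b := by
  have key : ∀ c : ℝ, IntervalIntegrable (fun x : ℝ => (Real.sqrt x)⁻¹) volume 0 c := by
    intro c
    rcases le_total 0 c with hc | hc
    · rw [intervalIntegrable_iff_integrableOn_Ioo_of_le hc]
      have h := intervalIntegral.intervalIntegrable_rpow' (a := 0) (b := c) (r := -(1/2))
        (by norm_num)
      rw [intervalIntegrable_iff_integrableOn_Ioo_of_le hc] at h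
      refine h.congr_fun (fun x hx => ?_) measurableSet_Ioo
      dsimp only; rw [Real.rpow_neg hx.1.le, ← Real.sqrt_eq_rpow]
    · refine IntervalIntegrable.symm ?_
      rw [intervalIntegrable_iff_integrableOn_Ioo_of_le hc]
      refine (integrableOn_zero (μ := volume)).congr_fun (fun x hx => ?_) measurableSet_Ioo
      rw [Real.sqrt_eq_zero_of_nonpos hx.2.le, inv_zero]
  exact (key a).symm.trans (key b)

lemma aux_sqrt_neg_ii (a b : ℝ) :
    IntervalIntegrable (fun x : ℝ => (Real.sqrt (-x))⁻¹) volume a b := by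
  simpa using (IntervalIntegrable.iff_comp_neg (f := fun x : ℝ => (Real.sqrt x)⁻¹) (by simp)).mp (aux_sqrt_ii (-a) (-b))

lemma aux_sqrt_sub_ii (c a b : ℝ) :
    IntervalIntegrable (fun x : ℝ => (Real.sqrt (c - x))⁻¹) volume a b := by
  simpa using (aux_sqrt_ii (c - a) (c - b)).comp_sub_left c

lemma aux_sqrt_add_ii (c a b : ℝ) :
    IntervalIntegrable (fun x : ℝ => (Real.sqrt (x + c))⁻¹) volume a b := by
  simpa using (aux_sqrt_ii (a + c) (b + c)).comp_add_right c

-- value of the inner integral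
lemma aux_inner (c : ℝ) (hc : 0 < c) :
    ∫⁻ y in Ici c, ENNReal.ofReal (1 / y ^ 2) = ENNReal.ofReal c⁻¹ := by
  rw [← Measure.restrict_congr_set (Ioi_ae_eq_Ici (a := c))]
  have hint : IntegrableOn (fun y : ℝ => 1 / y ^ 2) (Ioi c) := by
    have h := integrableOn_Ioi_rpow_of_lt (by norm_num : (-2 : ℝ) < -1) hc
    refine h.congr_fun (fun x hx => ?_) measurableSet_Ioi
    dsimp only; rw [show (-2 : ℝ) = -((2 : ℕ) : ℝ) by norm_num, Real.rpow_neg (hc.trans hx).le,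
      Real.rpow_natCast, one_div]
  rw [← ofReal_integral_eq_lintegral_ofReal hint
    (Filter.Eventually.of_forall fun y => by positivity)]
  congr 1
  have h2 := integral_Ioi_rpow_of_lt (by norm_num : (-2 : ℝ) < -1) hc
  calc ∫ y in Ioi c, 1 / y ^ 2
      = ∫ y in Ioi c, y ^ (-2 : ℝ) := by
        refine setIntegral_congr_fun measurableSet_Ioi (fun x hx => ?_)
        rw [show (-2 : ℝ) = -((2 : ℕ) : ℝ) by norm_num, Real.rpow_neg (hc.trans hx).le,
          Real.rpow_natCast, one_div]
    _ = c⁻¹ := by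
        rw [h2, show (-2 : ℝ) + 1 = -1 by norm_num, Real.rpow_neg_one]
        field_simp

-- divergence of the inner integral near 0
lemma aux_div : ∫⁻ y in Ioo (0 : ℝ) 1, ENNReal.ofReal (1 / y ^ 2) = ⊤ := by
  by_contra h
  have hne : ∫⁻ y in Ioo (0 : ℝ) 1, ENNReal.ofReal (1 / y ^ 2) ≠ ⊤ := h
  have hmeas : AEStronglyMeasurable (fun y : ℝ => 1 / y ^ 2)
      (volume.restrict (Ioo (0 : ℝ) 1)) := by
    have : Measurable fun y : ℝ => 1 / y ^ 2 := by
      simpa [one_div] using (measurable_id (α := ℝ)).pow_const 2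
    exact this.aestronglyMeasurable
  have hint : IntegrableOn (fun y : ℝ => 1 / y ^ 2) (Ioo (0 : ℝ) 1) :=
    (lintegral_ofReal_ne_top_iff_integrable hmeas
      (Filter.Eventually.of_forall fun y => by positivity)).mp hne
  have h2 : IntegrableOn (fun y : ℝ => y ^ (-2 : ℝ)) (Ioo (0 : ℝ) 1) := by
    refine hint.congr_fun (fun x hx => ?_) measurableSet_Ioo
    dsimp only; rw [show (-2 : ℝ) = -((2 : ℕ) : ℝ) by norm_num, Real.rpow_neg hx.1.le,
      Real.rpow_natCast, one_div]
  rw [intervalIntegral.integrableOn_Ioo_rpow_iff one_pos] at h2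
  norm_num at h2

-- the pointwise comparison
lemma aux_claim (x : ℝ) (h0 : x ≠ 0) (h : |x| < 1/2) :
    (Real.sqrt (|x| * (1/2 - |x|)))⁻¹ ≤
      2 * (Real.sqrt x)⁻¹ + 2 * (Real.sqrt (-x))⁻¹ + 2 * (Real.sqrt (1/2 - x))⁻¹ +
        2 * (Real.sqrt (x + 1/2))⁻¹ := by
  have key : ∀ u : ℝ, 0 < u → u < 1/2 →
      (Real.sqrt (u * (1/2 - u)))⁻¹ ≤ 2 * (Real.sqrt u)⁻¹ + 2 * (Real.sqrt (1/2 - u))⁻¹ := by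
    intro u hu hv
    have hv' : 0 < 1/2 - u := by linarith
    rw [Real.sqrt_mul hu.le, mul_inv]
    have hsu : 0 ≤ (Real.sqrt u)⁻¹ := by positivity
    have hsv : 0 ≤ (Real.sqrt (1/2 - u))⁻¹ := by positivity
    rcases le_total u (1/4) with h4 | h4
    · have hge : (1/2 : ℝ) ≤ Real.sqrt (1/2 - u) :=
        (Real.le_sqrt' (by norm_num)).mpr (by nlinarith)
      have h2 : (Real.sqrt (1/2 - u))⁻¹ ≤ 2 := by
        have := inv_anti₀ (show (0:ℝ) < 1/2 by norm_num) hge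
        linarith [this, show ((1:ℝ)/2)⁻¹ = 2 by norm_num]
      nlinarith [mul_le_mul_of_nonneg_left h2 hsu]
    · have hge : (1/2 : ℝ) ≤ Real.sqrt u :=
        (Real.le_sqrt' (by norm_num)).mpr (by nlinarith)
      have h2 : (Real.sqrt u)⁻¹ ≤ 2 := by
        have := inv_anti₀ (show (0:ℝ) < 1/2 by norm_num) hge
        linarith [this, show ((1:ℝ)/2)⁻¹ = 2 by norm_num]
      nlinarith [mul_le_mul_of_nonneg_right h2 hsv]
  have t1 : 0 ≤ 2 * (Real.sqrt x)⁻¹ := by positivity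
  have t2 : 0 ≤ 2 * (Real.sqrt (-x))⁻¹ := by positivity
  have t3 : 0 ≤ 2 * (Real.sqrt (1/2 - x))⁻¹ := by positivity
  have t4 : 0 ≤ 2 * (Real.sqrt (x + 1/2))⁻¹ := by positivity
  rcases h0.lt_or_gt with hx | hx
  · have habs : |x| = -x := abs_of_neg hx
    have hkey := key (-x) (by linarith) (by rw [← habs]; exact h)
    rw [show (1:ℝ)/2 - -x = x + 1/2 by ring] at hkey
    rw [habs, show (1:ℝ)/2 - -x = x + 1/2 by ring]
    linarith
  · have habs : |x| = x := abs_of_pos hx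
    have := key x hx (by rw [← habs]; exact h)
    rw [habs]
    linarith

theorem stmt_8 (k : ℤ) (hk : k ≠ 0) :
    (∫⁻ p : ℝ × ℝ in
        {p : ℝ × ℝ | 0 < p.2 ∧ -(1/2) ≤ p.1 ∧ p.1 ≤ 1/2 ∧
          1 / (k : ℝ) ^ 2 ≤ (p.1 + 1 / (k : ℝ)) ^ 2 + p.2 ^ 2 ∧
          1 / (k : ℝ) ^ 2 ≤ (p.1 - 1 / (k : ℝ)) ^ 2 + p.2 ^ 2},
        ENNReal.ofReal (1 / p.2 ^ 2)) < ⊤ ↔ |k| ≤ 4 := by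
  have hkR : (k : ℝ) ≠ 0 := Int.cast_ne_zero.mpr hk
  have hm0 : (0 : ℝ) < |(k : ℝ)| := abs_pos.mpr hkR
  set m : ℝ := |(k : ℝ)| with hm
  have hcabs : |1 / (k : ℝ)| = 1 / m := by rw [abs_div, abs_one]
  have hc_le : 1 / (k : ℝ) ≤ 1 / m := (abs_le.mp hcabs.le).2
  have hc_ge : -(1 / m) ≤ 1 / (k : ℝ) := (abs_le.mp hcabs.le).1
  have hk2 : (k : ℝ) ^ 2 = m ^ 2 := (sq_abs _).symm
  have hmeasf : Measurable fun p : ℝ × ℝ => ENNReal.ofReal (1 / p.2 ^ 2) := by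
    refine ENNReal.measurable_ofReal.comp ?_
    simpa [one_div] using (measurable_snd (α := ℝ) (β := ℝ)).pow_const 2
  constructor
  · intro hfin
    by_contra hgt
    push_neg at hgt
    have hm5 : (5 : ℝ) ≤ m := by
      have h5 : (5 : ℤ) ≤ |k| := hgt
      have : ((5 : ℤ) : ℝ) ≤ ((|k| : ℤ) : ℝ) := Int.cast_le.mpr h5
      rwa [Int.cast_abs, show ((5:ℤ):ℝ) = (5:ℝ) by norm_num] at this
    have ha : 2 / m < 1 / 2 := by
      rw [div_lt_div_iff₀ hm0 (by norm_num)]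
      linarith
    have hsub : Ioc (2 / m) (1 / 2) ×ˢ Ioo (0 : ℝ) 1 ⊆
        {p : ℝ × ℝ | 0 < p.2 ∧ -(1/2) ≤ p.1 ∧ p.1 ≤ 1/2 ∧
          1 / (k : ℝ) ^ 2 ≤ (p.1 + 1 / (k : ℝ)) ^ 2 + p.2 ^ 2 ∧
          1 / (k : ℝ) ^ 2 ≤ (p.1 - 1 / (k : ℝ)) ^ 2 + p.2 ^ 2} := by
      rintro ⟨x, y⟩ ⟨hx, hy⟩
      simp only [mem_Ioc, mem_Ioo] at hx hy
      have h2m : (0 : ℝ) < 2 / m := by positivity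
      have hplus : 1 / m ≤ x + 1 / (k : ℝ) := by
        have : 2 / m = 1 / m + 1 / m := by ring
        linarith [hx.1]
      have hminus : 1 / m ≤ x - 1 / (k : ℝ) := by
        have : 2 / m = 1 / m + 1 / m := by ring
        linarith [hx.1]
      have hsq : ∀ z : ℝ, 1 / m ≤ z → 1 / (k : ℝ) ^ 2 ≤ z ^ 2 + y ^ 2 := by
        intro z hz
        have h1 : (1 / m) ^ 2 ≤ z ^ 2 :=
          pow_le_pow_left₀ (by positivity) hz 2
        have : 1 / (k : ℝ) ^ 2 = (1 / m) ^ 2 := by rw [hk2]; ring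
        nlinarith [sq_nonneg y]
      exact ⟨hy.1, by linarith [hx.1], hx.2, hsq _ hplus, hsq _ hminus⟩
    have key : (∫⁻ p : ℝ × ℝ in Ioc (2 / m) (1 / 2) ×ˢ Ioo (0 : ℝ) 1,
        ENNReal.ofReal (1 / p.2 ^ 2)) = ⊤ := by
      rw [Measure.volume_eq_prod, ← Measure.prod_restrict,
        lintegral_prod _ hmeasf.aemeasurable]
      have hin : ∀ x : ℝ, (∫⁻ y in Ioo (0 : ℝ) 1,
          ENNReal.ofReal (1 / (x, y).2 ^ 2)) = ⊤ := fun _ => aux_div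
      rw [lintegral_congr hin, setLIntegral_const, Real.volume_Ioc, ENNReal.top_mul]
      rw [ne_eq, ENNReal.ofReal_eq_zero, not_le]
      linarith
    have hle : (⊤ : ENNReal) ≤ ∫⁻ p : ℝ × ℝ in
        {p : ℝ × ℝ | 0 < p.2 ∧ -(1/2) ≤ p.1 ∧ p.1 ≤ 1/2 ∧
          1 / (k : ℝ) ^ 2 ≤ (p.1 + 1 / (k : ℝ)) ^ 2 + p.2 ^ 2 ∧
          1 / (k : ℝ) ^ 2 ≤ (p.1 - 1 / (k : ℝ)) ^ 2 + p.2 ^ 2},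
        ENNReal.ofReal (1 / p.2 ^ 2) := key ▸ lintegral_mono_set hsub
    exact absurd hfin (not_lt.mpr hle)
  · intro hle4
    have hm4 : m ≤ 4 := by
      have : ((|k| : ℤ) : ℝ) ≤ ((4 : ℤ) : ℝ) := Int.cast_le.mpr hle4
      rwa [Int.cast_abs, show ((4 : ℤ) : ℝ) = (4 : ℝ) by norm_num] at this
    have h14 : (1 : ℝ)/4 ≤ 1/m := by
      rw [div_le_div_iff₀ (by norm_num) hm0]; linarith
    set A : Set (ℝ × ℝ) := {p : ℝ × ℝ | p.1 ∈ Icc (-(1/2) : ℝ) (1/2) ∧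
      Real.sqrt (|p.1| * (1/2 - |p.1|)) ≤ p.2} with hA
    have hA_meas : MeasurableSet A := by
      have hcont : Continuous fun x : ℝ => Real.sqrt (|x| * (1/2 - |x|)) :=
        Real.continuous_sqrt.comp (continuous_abs.mul (continuous_const.sub continuous_abs))
      have h1 : MeasurableSet {p : ℝ × ℝ | p.1 ∈ Icc (-(1/2) : ℝ) (1/2)} :=
        measurable_fst measurableSet_Icc
      have h2 : MeasurableSet {p : ℝ × ℝ | Real.sqrt (|p.1| * (1/2 - |p.1|)) ≤ p.2} :=
        (isClosed_le (hcont.comp continuous_fst) continuous_snd).measurableSet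
      exact h1.inter h2
    have hsub : {p : ℝ × ℝ | 0 < p.2 ∧ -(1/2) ≤ p.1 ∧ p.1 ≤ 1/2 ∧
          1 / (k : ℝ) ^ 2 ≤ (p.1 + 1 / (k : ℝ)) ^ 2 + p.2 ^ 2 ∧
          1 / (k : ℝ) ^ 2 ≤ (p.1 - 1 / (k : ℝ)) ^ 2 + p.2 ^ 2} ⊆ A := by
      rintro ⟨x, y⟩ ⟨hy, hx1, hx2, hq1, hq2⟩
      refine ⟨mem_Icc.mpr ⟨hx1, hx2⟩, ?_⟩
      have e1 : 1 / (k : ℝ) ^ 2 = (1 / (k : ℝ)) ^ 2 := by rw [div_pow, one_pow]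
      have habs2 : |2 * (1 / (k : ℝ)) * x| ≤ y ^ 2 + x ^ 2 :=
        abs_le.mpr ⟨by nlinarith, by nlinarith⟩
      have heq : |2 * (1 / (k : ℝ)) * x| = 2 * (1/m) * |x| := by
        rw [abs_mul, abs_mul, abs_two, hcabs]
      have hmono : 2 * ((1:ℝ)/4) * |x| ≤ 2 * (1/m) * |x| :=
        mul_le_mul_of_nonneg_right (by linarith) (abs_nonneg x)
      have hfin2 : |x| * (1/2 - |x|) ≤ y ^ 2 := by
        nlinarith [sq_abs x, habs2]
      have hys := Real.sqrt_le_sqrt hfin2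
      rwa [Real.sqrt_sq hy.le] at hys
    refine lt_of_le_of_lt (lintegral_mono_set hsub) ?_
    have heq2 : (∫⁻ p : ℝ × ℝ in A, ENNReal.ofReal (1 / p.2 ^ 2)) =
        ∫⁻ x, (Icc (-(1/2) : ℝ) (1/2)).indicator
          (fun x => ∫⁻ y in Ici (Real.sqrt (|x| * (1/2 - |x|))),
            ENNReal.ofReal (1 / y ^ 2)) x := by
      rw [← lintegral_indicator hA_meas, Measure.volume_eq_prod,
        lintegral_prod _ ((hmeasf.indicator hA_meas).aemeasurable)]
      refine lintegral_congr fun x => ?_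
      by_cases hx : x ∈ Icc (-(1/2) : ℝ) (1/2)
      · rw [Set.indicator_of_mem hx, ← lintegral_indicator measurableSet_Ici]
        refine lintegral_congr fun y => ?_
        simp only [hA, Set.indicator_apply, Set.mem_setOf_eq, Set.mem_Ici, hx, true_and]
      · rw [Set.indicator_of_notMem hx]
        have hz : ∀ y : ℝ, A.indicator
            (fun p : ℝ × ℝ => ENNReal.ofReal (1 / p.2 ^ 2)) (x, y) = 0 := by
          intro y
          rw [Set.indicator_of_notMem]
          rintro ⟨h1, -⟩
          exact hx h1
        rw [lintegral_congr hz, lintegral_zero]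
    rw [heq2, lintegral_indicator measurableSet_Icc]
    have hbound : (∫⁻ x in Icc (-(1/2) : ℝ) (1/2),
          ∫⁻ y in Ici (Real.sqrt (|x| * (1/2 - |x|))), ENNReal.ofReal (1 / y ^ 2)) ≤
        ∫⁻ x in Icc (-(1/2) : ℝ) (1/2),
          ENNReal.ofReal (2 * (Real.sqrt x)⁻¹ + 2 * (Real.sqrt (-x))⁻¹ +
            2 * (Real.sqrt (1/2 - x))⁻¹ + 2 * (Real.sqrt (x + 1/2))⁻¹) := by
      refine lintegral_mono_ae ?_
      have hnull : volume ({-(1/2), 0, 1/2} : Set ℝ) = 0 :=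
        ((Set.finite_singleton _).insert _ |>.insert _).measure_zero _
      filter_upwards [ae_restrict_mem measurableSet_Icc,
        ae_restrict_of_ae (measure_eq_zero_iff_ae_notMem.mp hnull)] with x hxI hxn
      simp only [Set.mem_insert_iff, Set.mem_singleton_iff, not_or] at hxn
      obtain ⟨hn1, hn2, hn3⟩ := hxn
      have hxle : |x| ≤ 1/2 := abs_le.mpr ⟨hxI.1, hxI.2⟩
      have hxlt : |x| < 1/2 := by
        rcases hxle.lt_or_eq with h | h
        · exact h
        · rcases (abs_eq (by norm_num : (0:ℝ) ≤ 1/2)).mp h with h' | h'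
          · exact absurd h' hn3
          · exact absurd h' hn1
      have hgpos : 0 < |x| * (1/2 - |x|) :=
        mul_pos (abs_pos.mpr hn2) (by linarith)
      rw [aux_inner _ (Real.sqrt_pos.mpr hgpos)]
      exact ENNReal.ofReal_le_ofReal (aux_claim x hn2 hxlt)
    refine lt_of_le_of_lt hbound ?_
    have hH : IntegrableOn (fun x : ℝ => 2 * (Real.sqrt x)⁻¹ + 2 * (Real.sqrt (-x))⁻¹ +
        2 * (Real.sqrt (1/2 - x))⁻¹ + 2 * (Real.sqrt (x + 1/2))⁻¹)
        (Icc (-(1/2) : ℝ) (1/2)) := by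
      have hii := ((((aux_sqrt_ii (-(1/2)) (1/2)).const_mul 2).add
        ((aux_sqrt_neg_ii (-(1/2)) (1/2)).const_mul 2)).add
        ((aux_sqrt_sub_ii (1/2) (-(1/2)) (1/2)).const_mul 2)).add
        ((aux_sqrt_add_ii (1/2) (-(1/2)) (1/2)).const_mul 2)
      exact (intervalIntegrable_iff_integrableOn_Icc_of_le (by norm_num)).mp hii
    exact hH.setLIntegral_lt_top
end

section
/- If (a,b,c) is a Markov triple (positive integers with a² + b² + c² = 3abc) with a ≤ b ≤ c and c > 1, then the mutation c' = 3ab - c satisfies c' < c. Consequently (a,b,c') is a Markov triple with smaller maximum unless a = b = c. -/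
/-!
Vieta jumping: for fixed `a, b` the Markov equation is the quadratic `x² - 3ab x + (a² + b²) = 0`
in `x`, with roots `c` and `c' = 3ab - c`. Evaluating it at `b` gives `a² + 2b² - 3ab² ≤ 0`, so
`b` lies between the two roots; hence `c' ≤ b < c` as soon as `b < c`. The remaining case `b = c`
forces `a² = c²(3a - 2) ≥ ac²`, i.e. `c² ≤ a ≤ c`, so `c = 1`.
-/

section Markov

variable {R : Type*} [CommRing R]

theorem markov_mutation {a b c : R} (h : a ^ 2 + b ^ 2 + c ^ 2 = 3 * a * b * c) :
    a ^ 2 + b ^ 2 + (3 * a * b - c) ^ 2 = 3 * a * b * (3 * a * b - c) := by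
  linear_combination h

variable [LinearOrder R] [IsStrictOrderedRing R]

theorem markov_sub_mul_sub_mutation_nonpos {a b c : R} (ha : 1 ≤ a) (hab : a ≤ b)
    (h : a ^ 2 + b ^ 2 + c ^ 2 = 3 * a * b * c) :
    (b - c) * (b - (3 * a * b - c)) ≤ 0 := by
  have hval : (b - c) * (b - (3 * a * b - c)) = a ^ 2 + 2 * b ^ 2 - 3 * a * b ^ 2 := by
    linear_combination -h
  rw [hval]
  nlinarith [mul_le_mul_of_nonneg_right ha (sq_nonneg b), mul_self_le_mul_self (by linarith) hab]

theorem markov_mutation_le_of_lt {a b c : R} (ha : 1 ≤ a) (hab : a ≤ b) (hbc : b < c)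
    (h : a ^ 2 + b ^ 2 + c ^ 2 = 3 * a * b * c) :
    3 * a * b - c ≤ b :=
  sub_nonneg.mp <| nonneg_of_mul_nonpos_right
    (by simpa only [mul_comm] using markov_sub_mul_sub_mutation_nonpos ha hab h)
    (sub_neg.mpr hbc)

theorem markov_eq_one_of_eq {a c : R} (ha : 1 ≤ a) (hac : a ≤ c)
    (h : a ^ 2 + c ^ 2 + c ^ 2 = 3 * a * c * c) :
    c = 1 := by
  have hca : c ^ 2 ≤ a := by
    nlinarith [mul_le_mul_of_nonneg_right ha (sq_nonneg c)]
  nlinarith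

end Markov

theorem stmt_11_general (a b c : ℤ) (ha : 0 < a)
    (hab : a ≤ b) (hbc : b ≤ c) (hc1 : 1 < c)
    (h : a ^ 2 + b ^ 2 + c ^ 2 = 3 * a * b * c) :
    3 * a * b - c < c ∧
      a ^ 2 + b ^ 2 + (3 * a * b - c) ^ 2 = 3 * a * b * (3 * a * b - c) := by
  refine ⟨?_, markov_mutation h⟩
  rcases hbc.lt_or_eq with hbc | rfl
  · exact (markov_mutation_le_of_lt ha hab hbc h).trans_lt hbc
  · exact absurd (markov_eq_one_of_eq ha hab h) hc1.ne'

theorem stmt_11 (a b c : ℤ) (ha : 0 < a) (hb : 0 < b) (hc : 0 < c)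
    (hab : a ≤ b) (hbc : b ≤ c) (hc1 : 1 < c)
    (h : a ^ 2 + b ^ 2 + c ^ 2 = 3 * a * b * c) :
    3 * a * b - c < c ∧
      a ^ 2 + b ^ 2 + (3 * a * b - c) ^ 2 = 3 * a * b * (3 * a * b - c) :=
  stmt_11_general a b c ha hab hbc hc1 h
end
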